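/- Let g be a metric on an open set U ⊆ {(u,x) ∈ ℝ⁴ : x ≠ 0} and let X = X^u∂_u + X^i∂_i be a smooth vector field on U. Set Ω = τ_x, X^r = r⁻¹x_iX^i, X̄^i = X^i − r⁻²x^i x_j X^j, write ∂_r f = r⁻¹x^i∂_i f for scalar functions f, and put Div X = ∂_uX^u + ∂_rX^r + ∂_iX̄^i. Then, pointwise on U, π̂^{αβ} + 2 X(ln Ω) g^{αβ} = −d^{-1/2}( (L_X h)^{αβ} + (Div X) h^{αβ} ) + R^{αβ}, where R = −d^{-1/2} L_X( d^{1/2} g⁻¹ − h ) − d^{-1/2}(Div X)( d^{1/2} g⁻¹ − h ) − 2 r⁻¹ τ_x⁻² X^r g⁻¹, with g⁻¹ = (g^{αβ}) and π̂ the normalized deformation tensor of X. -/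

import Mathlib

noncomputable section

/-- Points of the coordinate chart `ℝ⁴`. -/
abbrev Pt : Type := Fin 4 → ℝ

/-- Coordinate partial derivative `∂_α f`. -/
def pd (α : Fin 4) (f : Pt → ℝ) (x : Pt) : ℝ :=
  fderiv ℝ f x (Pi.single α (1 : ℝ))

/-- `|g| = |det (g_{αβ})|`. -/
def adet (g : Pt → Matrix (Fin 4) (Fin 4) ℝ) (x : Pt) : ℝ := |(g x).det|

/-- Inverse metric `g^{αβ}`. -/
def ginv (g : Pt → Matrix (Fin 4) (Fin 4) ℝ) (x : Pt) : Matrix (Fin 4) (Fin 4) ℝ := (g x)⁻¹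

/-- The wave operator `□_g φ = |g|^{-1/2} ∂_α(|g|^{1/2} g^{αβ} ∂_β φ)`. -/
def boxg (g : Pt → Matrix (Fin 4) (Fin 4) ℝ) (φ : Pt → ℝ) (x : Pt) : ℝ :=
  (Real.sqrt (adet g x))⁻¹ *
    ∑ α : Fin 4, pd α (fun y => Real.sqrt (adet g y) * ∑ β : Fin 4, ginv g y α β * pd β φ y) x

/-- `X f = X^α ∂_α f`. -/
def Xapp (X : Fin 4 → Pt → ℝ) (f : Pt → ℝ) (x : Pt) : ℝ := ∑ γ : Fin 4, X γ x * pd γ f x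

/-- A smooth symmetric everywhere-nondegenerate metric on `U`. -/
structure IsMetricOn (g : Pt → Matrix (Fin 4) (Fin 4) ℝ) (U : Set Pt) : Prop where
  smooth : ∀ α β : Fin 4, ContDiffOn ℝ (⊤ : ℕ∞) (fun x => g x α β) U
  symm : ∀ x ∈ U, ∀ α β : Fin 4, g x α β = g x β α
  det_ne : ∀ x ∈ U, (g x).det ≠ 0

/-- Deformation tensor `π_{αβ} = (L_X g)_{αβ}` of `X` (lower indices). -/
def piLow (g : Pt → Matrix (Fin 4) (Fin 4) ℝ) (X : Fin 4 → Pt → ℝ) (x : Pt) (α β : Fin 4) : ℝ :=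
  (∑ γ : Fin 4, X γ x * pd γ (fun y => g y α β) x)
    + (∑ γ : Fin 4, g x γ β * pd α (X γ) x) + (∑ γ : Fin 4, g x α γ * pd β (X γ) x)

/-- Raised deformation tensor `π^{αβ}`. -/
def piUp (g : Pt → Matrix (Fin 4) (Fin 4) ℝ) (X : Fin 4 → Pt → ℝ) (x : Pt) (α β : Fin 4) : ℝ :=
  ∑ α' : Fin 4, ∑ β' : Fin 4, ginv g x α α' * ginv g x β β' * piLow g X x α' β'

/-- Normalized deformation tensor `π̂^{αβ} = π^{αβ} - (1/2) g^{αβ} (g_{γδ} π^{γδ})`. -/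
def hatPi (g : Pt → Matrix (Fin 4) (Fin 4) ℝ) (X : Fin 4 → Pt → ℝ) (x : Pt) (α β : Fin 4) : ℝ :=
  piUp g X x α β - (1/2) * ginv g x α β * (∑ γ : Fin 4, ∑ δ : Fin 4, g x γ δ * piUp g X x γ δ)

/-- Lie derivative of a contravariant 2-tensor:
`(L_X R)^{αβ} = X^γ∂_γR^{αβ} - R^{γβ}∂_γX^α - R^{αγ}∂_γX^β`. -/
def lieT (X : Fin 4 → Pt → ℝ) (R : Pt → Fin 4 → Fin 4 → ℝ) (x : Pt) (α β : Fin 4) : ℝ :=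
  (∑ γ : Fin 4, X γ x * pd γ (fun y => R y α β) x)
    - (∑ γ : Fin 4, R x γ β * pd γ (X α) x)
    - (∑ γ : Fin 4, R x α γ * pd γ (X β) x)

/-- `τ_x = ⟨x⟩ = (1+|x|²)^{1/2}` in coordinates `(u,x)` (the index `0` is `u`). -/
def tauX (p : Pt) : ℝ := Real.sqrt (1 + ∑ i : Fin 3, (p i.succ) ^ 2)

/-- `r = |x|`. -/
def rB (p : Pt) : ℝ := Real.sqrt (∑ i : Fin 3, (p i.succ) ^ 2)

/-- The reference tensor `h`: `h^{uu}=0`, `h^{ui}=h^{iu}=-ω^i`, `h^{ij}=δ^{ij}`,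
where `ω^i = x^i/τ_x`. -/
def hmat (p : Pt) (α β : Fin 4) : ℝ :=
  if α = 0 then (if β = 0 then 0 else -(p β / tauX p))
  else if β = 0 then -(p α / tauX p)
  else if α = β then 1 else 0

/-- `d^{1/2} g⁻¹ - h`. -/
def Mten (g : Pt → Matrix (Fin 4) (Fin 4) ℝ) (p : Pt) (α β : Fin 4) : ℝ :=
  Real.sqrt (adet g p) * ginv g p α β - hmat p α β

/-- The radial component `X^r = r⁻¹ x_i X^i`. -/
def Xrad (X : Fin 4 → Pt → ℝ) (p : Pt) : ℝ :=
  (rB p)⁻¹ * ∑ i : Fin 3, p i.succ * X i.succ p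

/-- The angular part `X̄^i = X^i - r⁻² x^i x_j X^j`. -/
def Xang (X : Fin 4 → Pt → ℝ) (i : Fin 3) (p : Pt) : ℝ :=
  X i.succ p - ((rB p) ^ 2)⁻¹ * p i.succ * ∑ j : Fin 3, p j.succ * X j.succ p

/-- Radial derivative `∂_r f = r⁻¹ x^i ∂_i f`. -/
def pdr (f : Pt → ℝ) (p : Pt) : ℝ :=
  (rB p)⁻¹ * ∑ i : Fin 3, p i.succ * pd i.succ f p

/-- `Div X = ∂_u X^u + ∂_r X^r + ∂_i X̄^i`. -/
def divB (X : Fin 4 → Pt → ℝ) (p : Pt) : ℝ :=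
  pd 0 (X 0) p + pdr (Xrad X) p + ∑ i : Fin 3, pd i.succ (Xang X i) p

/-- The remainder tensor `R` of Statement 7. -/
def Rrem (g : Pt → Matrix (Fin 4) (Fin 4) ℝ) (X : Fin 4 → Pt → ℝ) (p : Pt) (α β : Fin 4) : ℝ :=
  -((Real.sqrt (adet g p))⁻¹ * lieT X (Mten g) p α β)
    - (Real.sqrt (adet g p))⁻¹ * divB X p * Mten g p α β
    - 2 * (rB p)⁻¹ * ((tauX p) ^ 2)⁻¹ * Xrad X p * ginv g p α β


/-! Write `D = √|g|` and `F = g⁻¹`. Unfolding `R`, the right-hand side collapses to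
`-D⁻¹ L_X(D F) - (Div X) F - 2 r⁻¹ τ⁻² X^r F`, and three classical identities finish the proof:
`L_X g⁻¹ = -π^{αβ}`, Jacobi's formula `X(D) = ½ D tr(g⁻¹ X(g))`, and
`g_{γδ} π^{γδ} = tr(g⁻¹ X(g)) + 2 ∂_α X^α`. In Bondi coordinates, with `φ = r⁻² x_j X^j` one has
`X^r = r φ` and `X̄^i = X^i - x^i φ`, whence `Div X = ∂_α X^α - 2 r⁻¹ X^r`; together with
`X(ln τ) = x_i X^i / τ²` and `1 - τ⁻² = r² τ⁻²` the terms in `X^r` cancel. -/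

theorem fderiv_comp_apply_of_hasDerivAt {E : Type*} [NormedAddCommGroup E] [NormedSpace ℝ E]
    {p : E} {φ : ℝ → ℝ} {φ' : ℝ} {f : E → ℝ}
    (hφ : HasDerivAt φ φ' (f p)) (hf : DifferentiableAt ℝ f p) (v : E) :
    fderiv ℝ (fun y => φ (f y)) p v = φ' * fderiv ℝ f p v := by
  change fderiv ℝ (φ ∘ f) p v = _
  rw [(hφ.comp_hasFDerivAt p hf.hasFDerivAt).fderiv]
  simp

section CoordinateDerivatives
variable {p : Pt} {γ : Fin 4} {f h : Pt → ℝ}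

theorem Xapp_eq_fderiv (X : Fin 4 → Pt → ℝ) :
    Xapp X f p = fderiv ℝ f p (fun γ => X γ p) := by
  conv_rhs => rw [← Finset.univ_sum_single (fun γ => X γ p)]
  simp only [Xapp, pd, map_sum]
  refine Finset.sum_congr rfl fun γ _ => ?_
  rw [← smul_eq_mul, ← map_smul, ← Pi.single_smul, smul_eq_mul, mul_one]

theorem pd_mul (hf : DifferentiableAt ℝ f p) (hh : DifferentiableAt ℝ h p) :
    pd γ (fun y => f y * h y) p = pd γ f p * h p + f p * pd γ h p := by
  simp only [pd, fderiv_fun_mul hf hh, add_apply, smul_apply, smul_eq_mul]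
  ring

theorem pd_sub (hf : DifferentiableAt ℝ f p) (hh : DifferentiableAt ℝ h p) :
    pd γ (fun y => f y - h y) p = pd γ f p - pd γ h p := by
  simp only [pd, fderiv_fun_sub hf hh, sub_apply]

theorem pd_coord (β : Fin 4) : pd γ (fun y : Pt => y β) p = (Pi.single γ 1 : Pt) β := by
  simp [pd, (hasFDerivAt_apply β p).fderiv]

end CoordinateDerivatives

namespace Matrix
variable {E : Type*} [NormedAddCommGroup E] [NormedSpace ℝ E] {p : E} {m n k : Type*}

def fderivMat (M : E → Matrix m k ℝ) (p v : E) : Matrix m k ℝ :=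
  of fun a b => fderiv ℝ (fun y => M y a b) p v

theorem fderivMat_mul [Fintype k] {A : E → Matrix m k ℝ} {B : E → Matrix k n ℝ}
    (hA : ∀ a b, DifferentiableAt ℝ (fun y => A y a b) p)
    (hB : ∀ a b, DifferentiableAt ℝ (fun y => B y a b) p) (v : E) :
    fderivMat (fun y => A y * B y) p v = fderivMat A p v * B p + A p * fderivMat B p v := by
  ext a b
  simp only [fderivMat, mul_apply, of_apply, add_apply]
  rw [fderiv_fun_sum (A := fun c y => A y a c * B y c b) fun c _ => (hA a c).mul (hB c b)]
  simp [fderiv_fun_mul (hA _ _) (hB _ _), Finset.sum_add_distrib, mul_comm, add_comm]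

variable [Fintype n] [DecidableEq n] {M : E → Matrix n n ℝ}

theorem differentiableAt_det (hM : ∀ a b, DifferentiableAt ℝ (fun y => M y a b) p) :
    DifferentiableAt ℝ (fun y => (M y).det) p := by
  simp only [det_apply']
  fun_prop

theorem fderiv_det (hM : ∀ a b, DifferentiableAt ℝ (fun y => M y a b) p) (v : E) :
    fderiv ℝ (fun y => (M y).det) p v = trace ((M p).adjugate * fderivMat M p v) := by
  set D := fderivMat M p v
  have hterm (σ : Equiv.Perm n) :
      HasFDerivAt (fun y => (Equiv.Perm.sign σ : ℝ) * ∏ i, M y (σ i) i)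
        ((Equiv.Perm.sign σ : ℝ) • ∑ i, (∏ j ∈ Finset.univ.erase i, M p (σ j) j) •
          fderiv ℝ (fun y => M y (σ i) i) p) p :=
    (HasFDerivAt.finsetProd fun i _ => (hM (σ i) i).hasFDerivAt).const_mul _
  -- Cramer's rule: differentiating column `i` of the Leibniz expansion gives `(adj M * D) i i`
  have hcramer (i : n) : ((M p).adjugate * D) i i = ((M p).updateCol i fun ν => D ν i).det := by
    rw [← cramer_apply, cramer_eq_adjugate_mulVec]; rfl
  simp only [det_apply']
  rw [(HasFDerivAt.fun_sum fun σ _ => hterm σ).fderiv, trace]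
  simp only [diag, hcramer, det_apply', _root_.smul_apply, _root_.sum_apply, smul_eq_mul,
    Finset.mul_sum]
  rw [Finset.sum_comm]
  refine Finset.sum_congr rfl fun i _ => Finset.sum_congr rfl fun σ _ => ?_
  rw [← Finset.mul_prod_erase _ _ (Finset.mem_univ i), updateCol_self,
    Finset.prod_congr rfl fun j hj => updateCol_ne (Finset.ne_of_mem_erase hj)]
  simp only [D, fderivMat, of_apply]
  ring

theorem differentiableAt_inv_apply (hM : ∀ a b, DifferentiableAt ℝ (fun y => M y a b) p)
    (hdet : (M p).det ≠ 0) (a b : n) :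
    DifferentiableAt ℝ (fun y => (M y)⁻¹ a b) p := by
  simp only [inv_def, Ring.inverse_eq_inv', smul_apply, smul_eq_mul, adjugate_apply]
  refine (differentiableAt_det hM).inv hdet |>.mul (differentiableAt_det fun i j => ?_)
  simp only [updateRow_apply]
  split_ifs
  · fun_prop
  · exact hM i j

theorem fderivMat_inv (hM : ∀ a b, DifferentiableAt ℝ (fun y => M y a b) p)
    (hdet : (M p).det ≠ 0) (v : E) :
    fderivMat (fun y => (M y)⁻¹) p v = -((M p)⁻¹ * fderivMat M p v * (M p)⁻¹) := by
  have hone : ∀ᶠ y in nhds p, M y * (M y)⁻¹ = 1 := by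
    filter_upwards [(differentiableAt_det hM).continuousAt.eventually_ne hdet] with y hy
    exact mul_nonsing_inv _ (isUnit_iff_ne_zero.mpr hy)
  have hzero : fderivMat (fun y => M y * (M y)⁻¹) p v = 0 := by
    ext a b
    simp only [fderivMat, of_apply, zero_apply]
    rw [Filter.EventuallyEq.fderiv_eq (hone.mono fun y hy => congrFun (congrFun hy a) b)]
    simp
  rw [fderivMat_mul hM (differentiableAt_inv_apply hM hdet)] at hzero
  calc fderivMat (fun y => (M y)⁻¹) p v
      = (M p)⁻¹ * (M p * fderivMat (fun y => (M y)⁻¹) p v) := by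
        rw [← Matrix.mul_assoc, nonsing_inv_mul _ (isUnit_iff_ne_zero.mpr hdet), Matrix.one_mul]
    _ = -((M p)⁻¹ * fderivMat M p v * (M p)⁻¹) := by
        rw [eq_neg_of_add_eq_zero_right hzero, Matrix.mul_neg, Matrix.mul_assoc]

theorem fderiv_sqrt_abs_det (hM : ∀ a b, DifferentiableAt ℝ (fun y => M y a b) p)
    (hdet : (M p).det ≠ 0) (v : E) :
    fderiv ℝ (fun y => √|(M y).det|) p v
      = 1 / 2 * √|(M p).det| * trace ((M p)⁻¹ * fderivMat M p v) := by
  have hφ := (hasDerivAt_abs hdet).sqrt (abs_ne_zero.mpr hdet)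
  have hadj : (M p).adjugate = (M p).det • (M p)⁻¹ := by
    rw [inv_def, Ring.inverse_eq_inv', smul_smul, mul_inv_cancel₀ hdet, one_smul]
  have hsq : √|(M p).det| ^ 2 = |(M p).det| := Real.sq_sqrt (abs_nonneg _)
  rw [fderiv_comp_apply_of_hasDerivAt (f := fun y => (M y).det) hφ (differentiableAt_det hM),
    fderiv_det hM, hadj, smul_mul, trace_smul, smul_eq_mul]
  field_simp
  rw [sign_mul_self, hsq]

end Matrix

section LieDerivative
variable {X : Fin 4 → Pt → ℝ} {p : Pt} {α β : Fin 4}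

theorem lieT_sub {R S : Pt → Fin 4 → Fin 4 → ℝ}
    (hR : DifferentiableAt ℝ (fun y => R y α β) p)
    (hS : DifferentiableAt ℝ (fun y => S y α β) p) :
    lieT X (fun y a b => R y a b - S y a b) p α β = lieT X R p α β - lieT X S p α β := by
  simp only [lieT, pd, fderiv_fun_sub hR hS, sub_apply, mul_sub, sub_mul,
    ← Finset.sum_sub_distrib]
  exact Finset.sum_congr rfl fun γ _ => by ring

theorem lieT_mul {c : Pt → ℝ} {R : Pt → Fin 4 → Fin 4 → ℝ}
    (hc : DifferentiableAt ℝ c p) (hR : DifferentiableAt ℝ (fun y => R y α β) p) :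
    lieT X (fun y a b => c y * R y a b) p α β
      = Xapp X c p * R p α β + c p * lieT X R p α β := by
  simp only [lieT, Xapp, pd, fderiv_fun_mul hc hR, add_apply, smul_apply, smul_eq_mul,
    Finset.mul_sum, Finset.sum_mul, ← Finset.sum_sub_distrib, ← Finset.sum_add_distrib]
  exact Finset.sum_congr rfl fun γ _ => by ring

end LieDerivative

section DeformationTensor
open Matrix
variable {g : Pt → Matrix (Fin 4) (Fin 4) ℝ} {X : Fin 4 → Pt → ℝ} {p : Pt}

def jacobian (X : Fin 4 → Pt → ℝ) (p : Pt) : Matrix (Fin 4) (Fin 4) ℝ :=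
  of fun a c => pd c (X a) p

theorem lieT_eq_matrix {R : Pt → Matrix (Fin 4) (Fin 4) ℝ} :
    of (lieT X R p)
      = fderivMat R p (fun γ => X γ p) - jacobian X p * R p - R p * (jacobian X p)ᵀ := by
  ext α β
  simp [lieT, fderivMat, jacobian, mul_apply, ← Xapp_eq_fderiv, Xapp, mul_comm]

theorem piLow_eq_matrix :
    of (piLow g X p)
      = fderivMat g p (fun γ => X γ p) + (jacobian X p)ᵀ * g p + g p * jacobian X p := by
  ext α β
  simp [piLow, fderivMat, jacobian, mul_apply, ← Xapp_eq_fderiv, Xapp, mul_comm]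

theorem piUp_eq_matrix : of (piUp g X p) = ginv g p * of (piLow g X p) * (ginv g p)ᵀ := by
  ext α β
  simp only [piUp, mul_apply, of_apply, transpose_apply, Finset.sum_mul]
  rw [Finset.sum_comm]
  exact Finset.sum_congr rfl fun _ _ => Finset.sum_congr rfl fun _ _ => by ring

theorem lieT_ginv (hg : ∀ a b, DifferentiableAt ℝ (fun y => g y a b) p) (hdet : (g p).det ≠ 0)
    (hsymm : (g p)ᵀ = g p) (α β : Fin 4) : lieT X (ginv g) p α β = -piUp g X p α β := by
  have hGF : g p * (g p)⁻¹ = 1 := mul_nonsing_inv _ (isUnit_iff_ne_zero.mpr hdet)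
  have hFG : (g p)⁻¹ * g p = 1 := nonsing_inv_mul _ (isUnit_iff_ne_zero.mpr hdet)
  have hFt : ((g p)⁻¹)ᵀ = (g p)⁻¹ := by rw [transpose_nonsing_inv, hsymm]
  have h : of (lieT X (ginv g) p) = -of (piUp g X p) := by
    rw [lieT_eq_matrix, piUp_eq_matrix, piLow_eq_matrix]
    simp only [show ginv g = fun y => (g y)⁻¹ from rfl, fderivMat_inv hg hdet, hFt,
      Matrix.mul_add, Matrix.add_mul, Matrix.mul_assoc, hGF, ← Matrix.mul_assoc (g p)⁻¹ (g p),
      hFG, Matrix.one_mul, Matrix.mul_one]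
    abel
  simpa using congrFun (congrFun h α) β

theorem sum_mul_piUp (hdet : (g p).det ≠ 0) :
    ∑ γ, ∑ δ, g p γ δ * piUp g X p γ δ
      = trace ((g p)⁻¹ * fderivMat g p (fun γ => X γ p)) + 2 * trace (jacobian X p) := by
  have hGF : g p * (g p)⁻¹ = 1 := mul_nonsing_inv _ (isUnit_iff_ne_zero.mpr hdet)
  have hFG : (g p)⁻¹ * g p = 1 := nonsing_inv_mul _ (isUnit_iff_ne_zero.mpr hdet)
  have hcontract :
      ∑ γ, ∑ δ, g p γ δ * piUp g X p γ δ = trace ((g p)ᵀ * of (piUp g X p)) := by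
    simp only [trace, diag, mul_apply, transpose_apply, of_apply]
    exact Finset.sum_comm
  rw [hcontract, piUp_eq_matrix, piLow_eq_matrix, ginv, trace_mul_comm, Matrix.mul_assoc,
    ← transpose_mul, hGF, transpose_one, Matrix.mul_one]
  simp only [Matrix.mul_add, trace_add, ← Matrix.mul_assoc]
  rw [trace_mul_comm _ (g p), ← Matrix.mul_assoc, hGF, hFG]
  simp only [Matrix.one_mul, trace_transpose]
  ring

theorem Xapp_sqrt_adet (hg : ∀ a b, DifferentiableAt ℝ (fun y => g y a b) p)
    (hdet : (g p).det ≠ 0) :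
    Xapp X (fun y => √(adet g y)) p
      = 1 / 2 * √(adet g p) * trace ((g p)⁻¹ * fderivMat g p (fun γ => X γ p)) := by
  rw [Xapp_eq_fderiv]
  exact fderiv_sqrt_abs_det hg hdet _

end DeformationTensor

section Bondi
variable {p : Pt}

theorem fderiv_sumSq (v : Pt) :
    fderiv ℝ (fun y : Pt => ∑ j : Fin 3, y j.succ ^ 2) p v
      = 2 * ∑ j : Fin 3, p j.succ * v j.succ := by
  rw [fderiv_fun_sum fun j _ => by fun_prop, _root_.sum_apply, Finset.mul_sum]
  refine Finset.sum_congr rfl fun j _ => ?_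
  rw [((hasFDerivAt_apply (𝕜 := ℝ) j.succ p).pow 2).fderiv]
  simp only [smul_apply, ContinuousLinearMap.proj_apply, smul_eq_mul]
  ring

theorem rB_sq : rB p ^ 2 = ∑ j : Fin 3, p j.succ ^ 2 :=
  Real.sq_sqrt (by positivity)

theorem rB_pos (h : ∃ i : Fin 3, p i.succ ≠ 0) : 0 < rB p := by
  obtain ⟨i, hi⟩ := h
  exact Real.sqrt_pos.mpr
    (Finset.sum_pos' (fun j _ => sq_nonneg _) ⟨i, Finset.mem_univ i, by positivity⟩)

theorem sumSq_ne_zero (hr : rB p ≠ 0) : ∑ j : Fin 3, p j.succ ^ 2 ≠ 0 :=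
  fun h => hr (by rw [rB, h, Real.sqrt_zero])

theorem tauX_sq : tauX p ^ 2 = 1 + rB p ^ 2 := by
  rw [tauX, rB_sq, Real.sq_sqrt (by positivity)]

theorem tauX_pos : 0 < tauX p :=
  Real.sqrt_pos.mpr (by positivity)

theorem differentiableAt_tauX : DifferentiableAt ℝ tauX p :=
  (by fun_prop : DifferentiableAt ℝ (fun y : Pt => 1 + ∑ j : Fin 3, y j.succ ^ 2) p).sqrt
    (by positivity)

theorem differentiableAt_rB (hr : rB p ≠ 0) : DifferentiableAt ℝ rB p :=
  (by fun_prop : DifferentiableAt ℝ (fun y : Pt => ∑ j : Fin 3, y j.succ ^ 2) p).sqrt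
    (sumSq_ne_zero hr)

theorem differentiableAt_hmat (α β : Fin 4) : DifferentiableAt ℝ (fun y => hmat y α β) p := by
  have hτ := differentiableAt_tauX (p := p)
  unfold hmat
  split_ifs <;> fun_prop (disch := exact tauX_pos.ne')

theorem pd_rB (hr : rB p ≠ 0) (i : Fin 3) : pd i.succ rB p = p i.succ / rB p := by
  change fderiv ℝ (fun y : Pt => √(∑ j : Fin 3, y j.succ ^ 2)) p _ = _
  rw [fderiv_comp_apply_of_hasDerivAt (f := fun y : Pt => ∑ j : Fin 3, y j.succ ^ 2)
    (Real.hasDerivAt_sqrt (sumSq_ne_zero hr)) (by fun_prop), fderiv_sumSq]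
  simp only [Pi.single_apply, Fin.succ_inj, mul_ite, mul_one, mul_zero, Finset.sum_ite_eq',
    Finset.mem_univ, if_true]
  change 1 / (2 * rB p) * _ = _
  field_simp

theorem pdr_rB (hr : rB p ≠ 0) : pdr rB p = 1 := by
  simp only [pdr, pd_rB hr]
  calc (rB p)⁻¹ * ∑ i : Fin 3, p i.succ * (p i.succ / rB p)
      = (∑ i : Fin 3, p i.succ ^ 2) / rB p ^ 2 := by
        rw [Finset.mul_sum, Finset.sum_div]; exact Finset.sum_congr rfl fun i _ => by ring
    _ = 1 := by rw [← rB_sq]; field_simp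

theorem pdr_mul {f h : Pt → ℝ} (hf : DifferentiableAt ℝ f p) (hh : DifferentiableAt ℝ h p) :
    pdr (fun y => f y * h y) p = pdr f p * h p + f p * pdr h p := by
  simp only [pdr, pd_mul hf hh, Finset.mul_sum, Finset.sum_mul, ← Finset.sum_add_distrib]
  exact Finset.sum_congr rfl fun i _ => by ring

theorem sum_pd_coord_mul {φ : Pt → ℝ} (hφ : DifferentiableAt ℝ φ p) (hr : rB p ≠ 0) :
    ∑ i : Fin 3, pd i.succ (fun y => y i.succ * φ y) p = 3 * φ p + rB p * pdr φ p := by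
  have hterm (i : Fin 3) :
      pd i.succ (fun y => y i.succ * φ y) p = φ p + p i.succ * pd i.succ φ p := by
    rw [pd_mul (by fun_prop) hφ, pd_coord, Pi.single_eq_same, one_mul]
  simp only [hterm, Finset.sum_add_distrib, pdr, ← mul_assoc, mul_inv_cancel₀ hr, one_mul]
  simp

theorem divB_eq_trace_jacobian_sub {X : Fin 4 → Pt → ℝ}
    (hX : ∀ a, DifferentiableAt ℝ (X a) p) (hr : rB p ≠ 0) :
    divB X p = Matrix.trace (jacobian X p) - 2 * (rB p)⁻¹ * Xrad X p := by
  set φ : Pt → ℝ := fun y => (rB y ^ 2)⁻¹ * ∑ j : Fin 3, y j.succ * X j.succ y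
  have hφ : DifferentiableAt ℝ φ p :=
    (((differentiableAt_rB hr).pow 2).inv (pow_ne_zero 2 hr)).mul (by fun_prop)
  have hrad : Xrad X = fun y => rB y * φ y := by
    funext y
    rcases eq_or_ne (rB y) 0 with h | h
    · simp [Xrad, φ, h]
    · simp only [Xrad, φ]; field_simp
  have hang (i : Fin 3) : Xang X i = fun y => X i.succ y - y i.succ * φ y := by
    funext y; simp only [Xang, φ]; ring
  rw [divB, hrad, pdr_mul (differentiableAt_rB hr) hφ, pdr_rB hr]
  simp only [hang]
  rw [Finset.sum_congr rfl fun i _ => pd_sub (hX i.succ) (by fun_prop), Finset.sum_sub_distrib,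
    sum_pd_coord_mul hφ hr]
  simp only [Matrix.trace, Matrix.diag, jacobian, Matrix.of_apply]
  rw [Fin.sum_univ_succ (n := 3)]
  field_simp
  ring

theorem Xapp_log_tauX (X : Fin 4 → Pt → ℝ) :
    Xapp X (fun y => Real.log (tauX y)) p
      = (∑ j : Fin 3, p j.succ * X j.succ p) / tauX p ^ 2 := by
  have hlog : (fun y => Real.log (tauX y))
      = fun y => Real.log (1 + ∑ j : Fin 3, y j.succ ^ 2) / 2 := by
    funext y; rw [tauX, Real.log_sqrt (by positivity)]
  have hq : 1 + ∑ j : Fin 3, p j.succ ^ 2 ≠ 0 := by positivity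
  have hφ := (((hasDerivAt_id' (∑ j : Fin 3, p j.succ ^ 2)).const_add 1).log hq).div_const 2
  rw [Xapp_eq_fderiv, hlog,
    fderiv_comp_apply_of_hasDerivAt (f := fun y : Pt => ∑ j : Fin 3, y j.succ ^ 2) hφ
      (by fun_prop),
    fderiv_sumSq, tauX_sq, rB_sq]
  field_simp

end Bondi

/-- the Bondi-coordinate formula
`π̂ + 2X(lnΩ)g⁻¹ = -d^{-1/2}(L_X h + (Div X) h) + R` with `Ω = τ_x`. -/
theorem hatPi_bondi_formula
    (U : Set Pt) (hU : IsOpen U)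
    (hU0 : ∀ p ∈ U, ∃ i : Fin 3, p i.succ ≠ 0)
    (g : Pt → Matrix (Fin 4) (Fin 4) ℝ) (hg : IsMetricOn g U)
    (X : Fin 4 → Pt → ℝ) (hX : ∀ α, ContDiffOn ℝ (⊤ : ℕ∞) (X α) U) :
    ∀ p ∈ U, ∀ α β : Fin 4,
      hatPi g X p α β + 2 * Xapp X (fun y => Real.log (tauX y)) p * ginv g p α β
        = -((Real.sqrt (adet g p))⁻¹ * (lieT X hmat p α β + divB X p * hmat p α β))
          + Rrem g X p α β := by
  intro p hp α β
  have hgd (a b : Fin 4) : DifferentiableAt ℝ (fun y => g y a b) p :=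
    ((hg.smooth a b).differentiableOn (by simp)).differentiableAt (hU.mem_nhds hp)
  have hXd (a : Fin 4) : DifferentiableAt ℝ (X a) p :=
    ((hX a).differentiableOn (by simp)).differentiableAt (hU.mem_nhds hp)
  have hdet := hg.det_ne p hp
  have hr := (rB_pos (hU0 p hp)).ne'
  have hD : DifferentiableAt ℝ (fun y => √(adet g y)) p :=
    ((Matrix.differentiableAt_det hgd).abs hdet).sqrt (abs_ne_zero.mpr hdet)
  have hD0 : √(adet g p) ≠ 0 := (Real.sqrt_pos.mpr (abs_pos.mpr hdet)).ne'
  have hF := Matrix.differentiableAt_inv_apply hgd hdet α β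
  have hlie : lieT X (Mten g) p α β
      = Xapp X (fun y => √(adet g y)) p * ginv g p α β + √(adet g p) * -piUp g X p α β
        - lieT X hmat p α β := by
    change lieT X (fun y a b => √(adet g y) * ginv g y a b - hmat y a b) p α β = _
    rw [lieT_sub (hD.mul hF) (differentiableAt_hmat α β), lieT_mul (R := ginv g) hD hF,
      lieT_ginv hgd hdet (Matrix.ext fun a b => hg.symm p hp b a)]
  rw [hatPi, Rrem, hlie, Xapp_sqrt_adet hgd hdet, sum_mul_piUp hdet,
    divB_eq_trace_jacobian_sub hXd hr, Xapp_log_tauX, Xrad, tauX_sq, Mten]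
  field_simp
  ring
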